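/- Let β ∈ (0, √2) and let u : ℝ → ℝ be four times continuously differentiable, not identically zero, with u''''(x) + β² u''(x) + e^{u(x)} − 1 = 0 for all x ∈ ℝ. Assume u, u′, u″ are square-integrable on ℝ, the function (e^{u} − 1)u is integrable on ℝ, and u(x), u′(x), u″(x), u‴(x) all tend to 0 as x → ±∞. Then there exists x₀ ∈ ℝ with u(x₀) ≤ ln(β⁴/4). -/

import Mathlib

/-!
Suppose `u > ln c` everywhere, where `c = β⁴/4 ∈ (0, 1)`. Then `(eᵘ - 1)u ≥ c u²`, strictly where
`u ≠ 0`, so `∫ ((eᵘ - 1)u - c u²) > 0`. On the other hand, multiplying the equation by `u` and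
completing the square gives the pointwise bound
`(eᵘ - 1)u - c u² = (u'')² - u''''u - (u'' + β²u/2)² ≤ (u''u' - u'''u)'`,
and the flux `u''u' - u'''u` vanishes at `±∞`, so the same integral is `≤ 0`.
-/

open MeasureTheory Real Filter Set Topology

theorem mul_sq_lt_exp_sub_one_mul {c t : ℝ} (hc : c ≤ 1) (hct : c < exp t) (ht : t ≠ 0) :
    c * t ^ 2 < (exp t - 1) * t := by
  rcases ht.lt_or_gt with hneg | hpos
  · have h := add_one_lt_exp (neg_ne_zero.mpr ht)
    have hmul : (-t + 1) * exp t < 1 := by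
      calc (-t + 1) * exp t < exp (-t) * exp t := by gcongr
        _ = 1 := by rw [← exp_add, neg_add_cancel, exp_zero]
    nlinarith [sq_pos_of_neg hneg]
  · nlinarith [add_one_lt_exp ht]

theorem ContDiff.hasDerivAt_iteratedDeriv {𝕜 F : Type*} [NontriviallyNormedField 𝕜]
    [NormedAddCommGroup F] [NormedSpace 𝕜 F] {f : 𝕜 → F} {m n : ℕ} (hf : ContDiff 𝕜 m f)
    (hn : n < m) (x : 𝕜) : HasDerivAt (iteratedDeriv n f) (iteratedDeriv (n + 1) f x) x := by
  rw [iteratedDeriv_succ]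
  exact (hf.differentiable_iteratedDeriv n (by exact_mod_cast hn) x).hasDerivAt

theorem integral_le_of_le_hasDerivAt {g G G' : ℝ → ℝ} {a b : ℝ} (hg : Integrable g)
    (hG : ∀ x, HasDerivAt G (G' x) x) (hle : ∀ x, g x ≤ G' x)
    (hbot : Tendsto G atBot (𝓝 a)) (htop : Tendsto G atTop (𝓝 b)) :
    ∫ x, g x ≤ b - a := by
  have hGcont : Continuous G := continuous_iff_continuousAt.2 fun x => (hG x).continuousAt
  have hint : Tendsto (fun R => ∫ x in -R..R, g x) atTop (𝓝 (∫ x, g x)) :=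
    intervalIntegral_tendsto_integral hg tendsto_neg_atTop_atBot tendsto_id
  have hends : Tendsto (fun R => G R - G (-R)) atTop (𝓝 (b - a)) :=
    htop.sub (hbot.comp tendsto_neg_atTop_atBot)
  refine le_of_tendsto_of_tendsto hint hends ?_
  filter_upwards [eventually_ge_atTop 0] with R hR
  exact intervalIntegral.integral_le_sub_of_hasDeriv_right_of_le (by linarith)
    hGcont.continuousOn (fun x _ => (hG x).hasDerivWithinAt) hg.integrableOn (fun x _ => hle x)

section Flux

variable {u : ℝ → ℝ}

noncomputable def flux (u : ℝ → ℝ) (x : ℝ) : ℝ :=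
  iteratedDeriv 2 u x * deriv u x - iteratedDeriv 3 u x * u x

theorem hasDerivAt_flux (hu : ContDiff ℝ 4 u) (x : ℝ) :
    HasDerivAt (flux u) (iteratedDeriv 2 u x ^ 2 - iteratedDeriv 4 u x * u x) x := by
  have h0 := hu.hasDerivAt_iteratedDeriv (n := 0) (by norm_num) x
  have h1 := hu.hasDerivAt_iteratedDeriv (n := 1) (by norm_num) x
  have h2 := hu.hasDerivAt_iteratedDeriv (n := 2) (by norm_num) x
  have h3 := hu.hasDerivAt_iteratedDeriv (n := 3) (by norm_num) x
  simp only [iteratedDeriv_zero, iteratedDeriv_one, zero_add] at h0 h1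
  exact ((h2.mul h1).sub (h3.mul h0)).congr_deriv (by ring)

theorem tendsto_flux {l : Filter ℝ} (h0 : Tendsto u l (𝓝 0)) (h1 : Tendsto (deriv u) l (𝓝 0))
    (h2 : Tendsto (iteratedDeriv 2 u) l (𝓝 0)) (h3 : Tendsto (iteratedDeriv 3 u) l (𝓝 0)) :
    Tendsto (flux u) l (𝓝 0) := by
  unfold flux
  simpa using (h2.mul h1).sub (h3.mul h0)

end Flux

theorem stmt17_general (β : ℝ) (hβ0 : 0 < β) (hβ : β < Real.sqrt 2)
    (u : ℝ → ℝ) (hu : ContDiff ℝ 4 u) (hne : u ≠ 0)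
    (heq : ∀ x : ℝ, iteratedDeriv 4 u x + β ^ 2 * iteratedDeriv 2 u x
        + Real.exp (u x) - 1 = 0)
    (hi1 : Integrable (fun x : ℝ => (u x) ^ 2))
    (hi4 : Integrable (fun x : ℝ => (Real.exp (u x) - 1) * u x))
    (hb0 : Tendsto u atBot (nhds 0))
    (hb1 : Tendsto (deriv u) atBot (nhds 0))
    (hb2 : Tendsto (iteratedDeriv 2 u) atBot (nhds 0))
    (hb3 : Tendsto (iteratedDeriv 3 u) atBot (nhds 0))
    (ht0 : Tendsto u atTop (nhds 0))
    (ht1 : Tendsto (deriv u) atTop (nhds 0))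
    (ht2 : Tendsto (iteratedDeriv 2 u) atTop (nhds 0))
    (ht3 : Tendsto (iteratedDeriv 3 u) atTop (nhds 0)) :
    ∃ x₀ : ℝ, u x₀ ≤ Real.log (β ^ 4 / 4) := by
  by_contra! hlog
  set c := β ^ 4 / 4 with hc
  have hc0 : 0 < c := by positivity
  have hc1 : c ≤ 1 := by nlinarith [(lt_sqrt hβ0.le).1 hβ]
  have hcu (x : ℝ) : c < exp (u x) := by simpa [exp_log hc0] using exp_lt_exp.2 (hlog x)
  set g := fun x => (exp (u x) - 1) * u x - c * u x ^ 2 with hg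
  have hg_nonneg : 0 ≤ g := fun x => by
    rcases eq_or_ne (u x) 0 with h | h
    · simp [hg, h]
    · exact sub_nonneg.2 (mul_sq_lt_exp_sub_one_mul hc1 (hcu x) h).le
  obtain ⟨x₁, hx₁⟩ : ∃ x, u x ≠ 0 := by simpa [funext_iff] using hne
  have hg_int : Integrable g := hi4.sub (hi1.const_mul c)
  have hg_pos : 0 < ∫ x, g x :=
    integral_pos_of_integrable_nonneg_nonzero (x := x₁) (by fun_prop) hg_int hg_nonneg
      (sub_pos.2 (mul_sq_lt_exp_sub_one_mul hc1 (hcu x₁) hx₁)).ne'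
  have hg_le_deriv (x : ℝ) : g x ≤ iteratedDeriv 2 u x ^ 2 - iteratedDeriv 4 u x * u x := by
    linear_combination (u x) * heq x + sq_nonneg (iteratedDeriv 2 u x + β ^ 2 / 2 * u x)
  have hg_nonpos : ∫ x, g x ≤ 0 - 0 :=
    integral_le_of_le_hasDerivAt hg_int (hasDerivAt_flux hu) hg_le_deriv
      (tendsto_flux hb0 hb1 hb2 hb3) (tendsto_flux ht0 ht1 ht2 ht3)
  linarith

/-- Any nontrivial homoclinic solution of `u'''' + β²u'' + e^u - 1 = 0` with
`β ∈ (0, √2)` dips below `ln(β⁴/4)` somewhere. -/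
theorem stmt17 (β : ℝ) (hβ0 : 0 < β) (hβ : β < Real.sqrt 2)
    (u : ℝ → ℝ) (hu : ContDiff ℝ 4 u) (hne : u ≠ 0)
    (heq : ∀ x : ℝ, iteratedDeriv 4 u x + β ^ 2 * iteratedDeriv 2 u x
        + Real.exp (u x) - 1 = 0)
    (hi1 : Integrable (fun x : ℝ => (u x) ^ 2))
    (hi2 : Integrable (fun x : ℝ => (deriv u x) ^ 2))
    (hi3 : Integrable (fun x : ℝ => (iteratedDeriv 2 u x) ^ 2))
    (hi4 : Integrable (fun x : ℝ => (Real.exp (u x) - 1) * u x))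
    (hb0 : Tendsto u atBot (nhds 0))
    (hb1 : Tendsto (deriv u) atBot (nhds 0))
    (hb2 : Tendsto (iteratedDeriv 2 u) atBot (nhds 0))
    (hb3 : Tendsto (iteratedDeriv 3 u) atBot (nhds 0))
    (ht0 : Tendsto u atTop (nhds 0))
    (ht1 : Tendsto (deriv u) atTop (nhds 0))
    (ht2 : Tendsto (iteratedDeriv 2 u) atTop (nhds 0))
    (ht3 : Tendsto (iteratedDeriv 3 u) atTop (nhds 0)) :
    ∃ x₀ : ℝ, u x₀ ≤ Real.log (β ^ 4 / 4) :=
  stmt17_general β hβ0 hβ u hu hne heq hi1 hi4 hb0 hb1 hb2 hb3 ht0 ht1 ht2 ht3
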